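/- For every α > 1/2, the quantity sup_{τ∈ℝ, p∈ℝ²} ∫_{ℝ²×ℝ²} dq dq' (1+|p|²)^α δ(τ + |p+q-q'|² + |q|² - |q'|²) / ((1+|p+q-q'|²)^α (1+|q|²)^α (1+|q'|²)^α) is finite, where the delta function restricts the integral to the surface {(q,q') : τ + |p+q-q'|² + |q|² - |q'|² = 0} with the induced surface measure. -/

import Mathlib

/-!
Fix `q` and resolve the delta in `q'`. With `R = |p + q|`, the point `q' = Qpt p q τ t` has
coordinate `c` along `p + q` and `t` orthogonally to it, so `|q'|² = c² + t²` and
`|p + q - q'|² = (R - c)² + t²`. Since `max (|c|, |R - c|) ≥ R / 2`, the `t`-integral is at most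
`(1 + |p|²)^α (1 + |q|²)^(-α) (1 + R²/4)^(-α) ∫ (1 + t²)^(-α) dt`, and the last integral is finite
because `2α > 1`. As `|p|² ≤ 2 (R² + |q|²)`, the prefactor is `O((1 + min (R², |q|²))^(-α))`, and
with the Jacobian `1 / (2R) ≤ 1 / (2 min (R, |q|))` the `q`-integrand is bounded by
`w (p + q) + w q`, where `w v = |v|⁻¹ (1 + |v|²)^(-α)`. In the plane `w` is integrable: near `0`
because `|v|⁻¹` is, at infinity because `1 + 2α > 2`. Translation invariance of Lebesgue measure
then gives a bound independent of `τ` and `p`.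
-/

open MeasureTheory

/-- squared Euclidean norm on ℝ² -/
def nsq (x : ℝ × ℝ) : ℝ := x.1^2 + x.2^2

/-- For fixed `p, q, τ`, the point `q'` on the line
`{q' : τ + |p+q-q'|² + |q|² - |q'|² = 0}` (equivalently `2 q'·(p+q) = τ + |p+q|² + |q|²`)
whose component along the unit vector `e = (p+q)/|p+q|` is fixed by the delta constraint and
whose orthogonal component (along the rotated vector `e⊥`) is `t`. -/
noncomputable def Qpt (p q : ℝ × ℝ) (τ t : ℝ) : ℝ × ℝ :=
  let R := Real.sqrt (nsq (p + q))
  let e : ℝ × ℝ := (R⁻¹ * (p + q).1, R⁻¹ * (p + q).2)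
  let c := (τ + nsq (p + q) + nsq q) / (2 * R)
  (c * e.1 - t * e.2, c * e.2 + t * e.1)

open Set Real

lemma nsq_nonneg (x : ℝ × ℝ) : 0 ≤ nsq x := by
  unfold nsq; positivity

lemma nsq_pos {x : ℝ × ℝ} (hx : x ≠ 0) : 0 < nsq x := by
  obtain ⟨a, b⟩ := x
  have hab : a ≠ 0 ∨ b ≠ 0 := by
    by_contra! h
    exact hx (Prod.ext h.1 h.2)
  unfold nsq
  rcases hab with h | h <;> positivity

lemma nsq_le_two_mul (p q : ℝ × ℝ) : nsq p ≤ 2 * (nsq (p + q) + nsq q) := by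
  simp only [nsq, Prod.fst_add, Prod.snd_add]
  nlinarith [sq_nonneg (p.1 + 2 * q.1), sq_nonneg (p.2 + 2 * q.2)]

lemma sq_norm_le_nsq (x : ℝ × ℝ) : ‖x‖ ^ 2 ≤ nsq x := by
  rw [Prod.norm_def, Real.norm_eq_abs, Real.norm_eq_abs, nsq]
  rcases max_cases |x.1| |x.2| with ⟨h, _⟩ | ⟨h, _⟩ <;> rw [h, sq_abs] <;>
    nlinarith [sq_nonneg x.1, sq_nonneg x.2]

lemma inv_sqrt_nsq_le_inv_norm (x : ℝ × ℝ) : (√(nsq x))⁻¹ ≤ ‖x‖⁻¹ := by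
  rcases eq_or_ne x 0 with rfl | hx
  · simp [nsq]
  · exact inv_anti₀ (norm_pos_iff.mpr hx)
      ((Real.le_sqrt (norm_nonneg x) (nsq_nonneg x)).mpr (sq_norm_le_nsq x))

lemma nsq_frame {u : ℝ × ℝ} {R : ℝ} (hR : R ^ 2 = nsq u) (hR0 : R ≠ 0) (c t : ℝ) :
    nsq (c * (R⁻¹ * u.1) - t * (R⁻¹ * u.2), c * (R⁻¹ * u.2) + t * (R⁻¹ * u.1)) =
      c ^ 2 + t ^ 2 := by
  have hunit : R⁻¹ ^ 2 * nsq u = 1 := by rw [← hR]; field_simp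
  unfold nsq at hunit ⊢
  linear_combination (c ^ 2 + t ^ 2) * hunit

lemma nsq_sub_frame {u : ℝ × ℝ} {R : ℝ} (hR : R ^ 2 = nsq u) (hR0 : R ≠ 0) (c t : ℝ) :
    nsq (u - (c * (R⁻¹ * u.1) - t * (R⁻¹ * u.2), c * (R⁻¹ * u.2) + t * (R⁻¹ * u.1))) =
      (R - c) ^ 2 + t ^ 2 := by
  have hunit : R⁻¹ ^ 2 * nsq u = 1 := by rw [← hR]; field_simp
  have hinv : R⁻¹ * R = 1 := inv_mul_cancel₀ hR0
  unfold nsq at hunit hR ⊢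
  simp only [Prod.fst_sub, Prod.snd_sub]
  linear_combination (c ^ 2 + t ^ 2 - 2 * c * R) * hunit - hR +
    2 * c * R⁻¹ * (u.1 ^ 2 + u.2 ^ 2) * hinv

lemma nsq_Qpt {p q : ℝ × ℝ} (h : p + q ≠ 0) (τ t : ℝ) :
    nsq (Qpt p q τ t) = ((τ + nsq (p + q) + nsq q) / (2 * √(nsq (p + q)))) ^ 2 + t ^ 2 :=
  nsq_frame (Real.sq_sqrt (nsq_nonneg _)) (Real.sqrt_pos.mpr (nsq_pos h)).ne' _ _

lemma nsq_sub_Qpt {p q : ℝ × ℝ} (h : p + q ≠ 0) (τ t : ℝ) :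
    nsq (p + q - Qpt p q τ t) =
      (√(nsq (p + q)) - (τ + nsq (p + q) + nsq q) / (2 * √(nsq (p + q)))) ^ 2 + t ^ 2 :=
  nsq_sub_frame (Real.sq_sqrt (nsq_nonneg _)) (Real.sqrt_pos.mpr (nsq_pos h)).ne' _ _

lemma one_add_sq_div_four_mul_le (r c t : ℝ) :
    (1 + r ^ 2 / 4) * (1 + t ^ 2) ≤ (1 + ((r - c) ^ 2 + t ^ 2)) * (1 + (c ^ 2 + t ^ 2)) := by
  -- `(r - c)² + c² ≥ r² / 2`
  nlinarith [sq_nonneg (r - 2 * c), sq_nonneg t, mul_nonneg (sq_nonneg t) (sq_nonneg (r - 2 * c)),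
    sq_nonneg (t ^ 2), mul_nonneg (sq_nonneg c) (sq_nonneg (r - c))]

lemma one_add_mul_one_add_min_le {a b x : ℝ} (ha : 0 ≤ a) (hb : 0 ≤ b) (hx : x ≤ 2 * (a + b)) :
    (1 + x) * (1 + min a b) ≤ 16 * ((1 + b) * (1 + a / 4)) := by
  rcases min_cases a b with ⟨h, hab⟩ | ⟨h, hab⟩ <;> rw [h] <;> nlinarith

lemma integrable_inv_rpow_one_add_sq {α : ℝ} (hα : 1 / 2 < α) :
    Integrable fun t : ℝ => ((1 + t ^ 2) ^ α)⁻¹ := by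
  have h := integrable_rpow_neg_one_add_norm_sq (E := ℝ) (μ := volume) (r := 2 * α)
    (by simp only [Module.finrank_self, Nat.cast_one]; linarith)
  refine h.congr (Filter.Eventually.of_forall fun t => ?_)
  simp only [Real.norm_eq_abs, sq_abs]
  rw [show -(2 * α) / 2 = -α by ring, Real.rpow_neg (by positivity)]

lemma integrable_inv_norm_mul_of_finrank_eq_two {E : Type*} [NormedAddCommGroup E]
    [NormedSpace ℝ E] [MeasurableSpace E] [BorelSpace E] [FiniteDimensional ℝ E]
    (hE : Module.finrank ℝ E = 2)
    (μ : Measure E) [μ.IsAddHaarMeasure] {f : ℝ → ℝ} (hf : IntegrableOn f (Ioi 0)) :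
    Integrable (fun x => ‖x‖⁻¹ * f ‖x‖) μ := by
  have : Nontrivial E := Module.nontrivial_of_finrank_eq_succ hE
  refine (integrable_fun_norm_addHaar μ (f := fun y => y⁻¹ * f y)).mpr ?_
  refine hf.congr_fun (fun y (hy : 0 < y) => ?_) measurableSet_Ioi
  simp [hE, hy.ne']

noncomputable def fiberIntegrand (α τ : ℝ) (p q : ℝ × ℝ) (t : ℝ) : ℝ :=
  (1 + nsq p) ^ α /
    ((1 + nsq (p + q - Qpt p q τ t)) ^ α * (1 + nsq q) ^ α * (1 + nsq (Qpt p q τ t)) ^ α)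

noncomputable def fiberIntegral (α τ : ℝ) (p q : ℝ × ℝ) : ℝ :=
  if p + q = 0 then 0 else 1 / (2 * √(nsq (p + q))) * ∫ t, fiberIntegrand α τ p q t

-- `radialWeight α (nsq v)` is the weight `w v` above.
noncomputable def radialWeight (α s : ℝ) : ℝ := (√s)⁻¹ * ((1 + s) ^ α)⁻¹

lemma radialWeight_nonneg {α s : ℝ} (hs : 0 ≤ s) : 0 ≤ radialWeight α s := by
  unfold radialWeight
  positivity

lemma integrable_radialWeight_nsq {α : ℝ} (hα : 1 / 2 < α) :
    Integrable fun v : ℝ × ℝ => radialWeight α (nsq v) := by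
  have hdom := integrable_inv_norm_mul_of_finrank_eq_two (E := ℝ × ℝ) (by simp) volume
    (integrable_inv_rpow_one_add_sq hα).integrableOn
  refine hdom.mono' (by unfold radialWeight nsq; fun_prop) (.of_forall fun v => ?_)
  have := nsq_nonneg v
  rw [Real.norm_of_nonneg (radialWeight_nonneg this), radialWeight]
  gcongr ?_ * ?_
  · exact inv_sqrt_nsq_le_inv_norm v
  · gcongr
    exact sq_norm_le_nsq v

section Bounds

variable {α : ℝ} (τ : ℝ)

lemma fiberIntegrand_nonneg (p q : ℝ × ℝ) (t : ℝ) : 0 ≤ fiberIntegrand α τ p q t := by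
  unfold fiberIntegrand
  have := nsq_nonneg p
  have := nsq_nonneg q
  have := nsq_nonneg (p + q - Qpt p q τ t)
  have := nsq_nonneg (Qpt p q τ t)
  positivity

lemma fiberIntegral_nonneg (p q : ℝ × ℝ) : 0 ≤ fiberIntegral α τ p q := by
  unfold fiberIntegral
  split_ifs
  · rfl
  · exact mul_nonneg (by positivity) (integral_nonneg (fiberIntegrand_nonneg τ p q))

lemma fiberIntegrand_le {p q : ℝ × ℝ} (hα : 0 ≤ α) (h : p + q ≠ 0) (t : ℝ) :
    fiberIntegrand α τ p q t ≤
      (1 + nsq p) ^ α / ((1 + nsq q) ^ α * (1 + nsq (p + q) / 4) ^ α) * ((1 + t ^ 2) ^ α)⁻¹ := by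
  unfold fiberIntegrand
  rw [nsq_Qpt h, nsq_sub_Qpt h]
  generalize (τ + nsq (p + q) + nsq q) / (2 * √(nsq (p + q))) = c
  have hr := Real.sq_sqrt (nsq_nonneg (p + q))
  generalize √(nsq (p + q)) = r at hr ⊢
  rw [← hr]
  have := nsq_nonneg p
  have := nsq_nonneg q
  have key := rpow_le_rpow (by positivity) (one_add_sq_div_four_mul_le r c t) hα
  rw [mul_rpow (by positivity) (by positivity), mul_rpow (by positivity) (by positivity)] at key
  calc (1 + nsq p) ^ α /
        ((1 + ((r - c) ^ 2 + t ^ 2)) ^ α * (1 + nsq q) ^ α * (1 + (c ^ 2 + t ^ 2)) ^ α)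
      = (1 + nsq p) ^ α /
          ((1 + nsq q) ^ α * ((1 + ((r - c) ^ 2 + t ^ 2)) ^ α * (1 + (c ^ 2 + t ^ 2)) ^ α)) := by
        ring
    _ ≤ (1 + nsq p) ^ α / ((1 + nsq q) ^ α * ((1 + r ^ 2 / 4) ^ α * (1 + t ^ 2) ^ α)) := by
        gcongr
    _ = (1 + nsq p) ^ α / ((1 + nsq q) ^ α * (1 + r ^ 2 / 4) ^ α) * ((1 + t ^ 2) ^ α)⁻¹ := by
        ring

lemma integral_fiberIntegrand_le {p q : ℝ × ℝ} (hα : 1 / 2 < α) (h : p + q ≠ 0) :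
    ∫ t, fiberIntegrand α τ p q t ≤
      (1 + nsq p) ^ α / ((1 + nsq q) ^ α * (1 + nsq (p + q) / 4) ^ α) *
        ∫ t : ℝ, ((1 + t ^ 2) ^ α)⁻¹ := by
  rw [← integral_const_mul]
  exact integral_mono_of_nonneg (.of_forall (fiberIntegrand_nonneg τ p q))
    ((integrable_inv_rpow_one_add_sq hα).const_mul _)
    (.of_forall (fiberIntegrand_le τ (by linarith) h))

lemma one_add_nsq_rpow_div_le (p q : ℝ × ℝ) (hα : 0 ≤ α) :
    (1 + nsq p) ^ α / ((1 + nsq q) ^ α * (1 + nsq (p + q) / 4) ^ α) ≤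
      16 ^ α * ((1 + min (nsq (p + q)) (nsq q)) ^ α)⁻¹ := by
  have hp := nsq_nonneg p
  have hq := nsq_nonneg q
  have hpq := nsq_nonneg (p + q)
  have hm : 0 ≤ min (nsq (p + q)) (nsq q) := le_min hpq hq
  rw [← mul_rpow (by positivity) (by positivity), div_le_iff₀ (by positivity),
    ← inv_rpow (by positivity), ← mul_rpow (by positivity) (by positivity),
    ← mul_rpow (by positivity) (by positivity)]
  refine rpow_le_rpow (by positivity) ?_ hα
  rw [← div_eq_mul_inv, div_mul_eq_mul_div, le_div_iff₀ (by positivity)]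
  exact one_add_mul_one_add_min_le hpq hq (nsq_le_two_mul p q)

lemma fiberIntegral_le (p : ℝ × ℝ) {q : ℝ × ℝ} (hα : 1 / 2 < α) (hq : q ≠ 0) :
    fiberIntegral α τ p q ≤ (∫ t : ℝ, ((1 + t ^ 2) ^ α)⁻¹) / 2 * 16 ^ α *
      (radialWeight α (nsq (p + q)) + radialWeight α (nsq q)) := by
  have hK : 0 ≤ ∫ t : ℝ, ((1 + t ^ 2) ^ α)⁻¹ := integral_nonneg fun t => by positivity
  have hwa := radialWeight_nonneg (α := α) (nsq_nonneg (p + q))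
  have hwb := radialWeight_nonneg (α := α) (nsq_nonneg q)
  unfold fiberIntegral
  split_ifs with hpq
  · positivity
  set m := min (nsq (p + q)) (nsq q)
  have hm : 0 < m := lt_min (nsq_pos hpq) (nsq_pos hq)
  have hmin : radialWeight α m ≤ radialWeight α (nsq (p + q)) + radialWeight α (nsq q) := by
    rcases min_choice (nsq (p + q)) (nsq q) with h | h <;> rw [show m = _ from h] <;> linarith
  calc 1 / (2 * √(nsq (p + q))) * ∫ t, fiberIntegrand α τ p q t
      ≤ 1 / (2 * √(nsq (p + q))) * ((1 + nsq p) ^ α /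
          ((1 + nsq q) ^ α * (1 + nsq (p + q) / 4) ^ α) * ∫ t : ℝ, ((1 + t ^ 2) ^ α)⁻¹) := by
        gcongr
        exact integral_fiberIntegrand_le τ hα hpq
    _ ≤ 1 / (2 * √(nsq (p + q))) *
          (16 ^ α * ((1 + m) ^ α)⁻¹ * ∫ t : ℝ, ((1 + t ^ 2) ^ α)⁻¹) := by
        gcongr
        exact one_add_nsq_rpow_div_le p q (by linarith)
    _ = (∫ t : ℝ, ((1 + t ^ 2) ^ α)⁻¹) / 2 * 16 ^ α *
          ((√(nsq (p + q)))⁻¹ * ((1 + m) ^ α)⁻¹) := by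
        ring
    _ ≤ (∫ t : ℝ, ((1 + t ^ 2) ^ α)⁻¹) / 2 * 16 ^ α * radialWeight α m := by
        unfold radialWeight
        gcongr
        exact min_le_left _ _
    _ ≤ _ := by gcongr

end Bounds

/-- The delta is resolved in `q'`: for fixed `q` the constraint is linear in `q'`, the surface
measure contributes the Jacobian `1/(2|p+q|)`, and `t` is the free coordinate of `q'` on the
line. -/
theorem stmt2 (α : ℝ) (hα : 1/2 < α) :
    ∃ C : ℝ, ∀ (τ : ℝ) (p : ℝ × ℝ),
      (∫ q : ℝ × ℝ, if p + q = 0 then 0 else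
        (1 / (2 * Real.sqrt (nsq (p + q)))) *
          ∫ t : ℝ, (1 + nsq p) ^ α /
            ((1 + nsq (p + q - Qpt p q τ t)) ^ α * (1 + nsq q) ^ α *
              (1 + nsq (Qpt p q τ t)) ^ α)) ≤ C := by
  set c := (∫ t : ℝ, ((1 + t ^ 2) ^ α)⁻¹) / 2 * 16 ^ α
  have hw := integrable_radialWeight_nsq hα
  refine ⟨c * (2 * ∫ v, radialWeight α (nsq v)), fun τ p => ?_⟩
  have hw_shift := hw.comp_add_left p
  change ∫ q, fiberIntegral α τ p q ≤ _
  calc ∫ q, fiberIntegral α τ p q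
      ≤ ∫ q, c * (radialWeight α (nsq (p + q)) + radialWeight α (nsq q)) :=
        integral_mono_of_nonneg (.of_forall (fiberIntegral_nonneg τ p))
          ((hw_shift.add hw).const_mul c)
          ((Measure.ae_ne volume 0).mono fun q hq => fiberIntegral_le τ p hα hq)
    _ = c * (2 * ∫ v, radialWeight α (nsq v)) := by
        rw [integral_const_mul, integral_add hw_shift hw,
          integral_add_left_eq_self (fun v => radialWeight α (nsq v))]
        ring
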